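/- For all positive integers n, the 2-adic valuation of the Pell number P_n equals the 2-adic valuation of n, i.e., ν_2(P_n) = ν_2(n). -/
import Mathlib

def pellP : ℕ → ℕ
  | 0 => 0
  | 1 => 1
  | n + 2 => 2 * pellP (n + 1) + pellP n

def pellQ : ℕ → ℕ
  | 0 => 2
  | 1 => 2
  | n + 2 => 2 * pellQ (n + 1) + pellQ n

lemma pellP_add (n : ℕ) : ∀ m, pellP (m + n + 1) =
    pellP (m + 1) * pellP (n + 1) + pellP m * pellP n := by
  intro m
  induction m using Nat.twoStepInduction with
  | zero => simp [pellP]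
  | one =>
    have : 1 + n + 1 = n + 2 := by omega
    rw [this, pellP]
    simp [pellP]
  | more m ih1 ih2 =>
    have e1 : m + 2 + n + 1 = (m + n + 1) + 2 := by omega
    have e2 : m + n + 1 + 1 = (m + 1) + n + 1 := by omega
    have h3 : pellP (m + 2 + 1) = 2 * pellP (m + 1 + 1) + pellP (m + 1) := rfl
    have h4 : pellP (m + 2) = 2 * pellP (m + 1) + pellP m := rfl
    have h5 : pellP (m + 1 + 1) = 2 * pellP (m + 1) + pellP m := by
      rw [show m + 1 + 1 = m + 2 from rfl, h4]
    rw [e1, pellP, e2, ih2, ih1, h3, h5]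
    ring

lemma pellQ_eq (n : ℕ) : pellQ (n + 1) = pellP (n + 2) + pellP n := by
  induction n using Nat.twoStepInduction with
  | zero => simp [pellP, pellQ]
  | one => simp [pellP, pellQ]
  | more n ih1 ih2 =>
    have a1 : pellP (n + 2 + 2) = 2 * pellP (n + 2 + 1) + pellP (n + 2) := rfl
    have a2 : pellP (n + 2 + 1) = 2 * pellP (n + 1 + 1) + pellP (n + 1) := rfl
    have a3 : pellP (n + 2) = 2 * pellP (n + 1) + pellP n := rfl
    have a4 : pellP (n + 1 + 2) = pellP (n + 2 + 1) := rfl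
    rw [show n + 2 + 1 = n + 1 + 2 from by omega, pellQ, ih1, ih2]
    omega

lemma pellP_double (m : ℕ) : pellP (2 * (m + 1)) = pellP (m + 1) * pellQ (m + 1) := by
  have h := pellP_add m (m + 1)
  rw [show m + 1 + m + 1 = 2 * (m + 1) from by omega] at h
  rw [h, pellQ_eq]
  ring

lemma pellP_mod_two (n : ℕ) : pellP n % 2 = n % 2 := by
  induction n using Nat.twoStepInduction with
  | zero => simp [pellP]
  | one => simp [pellP]
  | more n ih1 ih2 => rw [pellP]; omega

lemma pellQ_mod_four (n : ℕ) : pellQ n % 4 = 2 := by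
  induction n using Nat.twoStepInduction with
  | zero => simp [pellQ]
  | one => simp [pellQ]
  | more n ih1 ih2 => rw [pellQ]; omega

lemma pellP_pos (n : ℕ) (hn : 0 < n) : 0 < pellP n := by
  induction n using Nat.twoStepInduction with
  | zero => omega
  | one => simp [pellP]
  | more n ih1 ih2 => rw [pellP]; have := ih2 (by omega); omega

lemma padicValNat_pellQ (n : ℕ) : padicValNat 2 (pellQ n) = 1 := by
  have h := pellQ_mod_four n
  obtain ⟨k, hk⟩ : ∃ k, pellQ n = 2 * k := ⟨pellQ n / 2, by omega⟩
  have hko : ¬ (2 ∣ k) := by omega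
  rw [hk, padicValNat.mul (by norm_num) (by omega),
    padicValNat.eq_zero_of_not_dvd hko, padicValNat.self (by norm_num)]

theorem padicValNat_two_pellP (n : ℕ) (hn : 0 < n) :
    padicValNat 2 (pellP n) = padicValNat 2 n := by
  induction n using Nat.strong_induction_on with
  | _ n ih =>
    rcases Nat.even_or_odd n with he | ho
    · obtain ⟨m, hm⟩ := he
      have hm1 : 0 < m := by omega
      obtain ⟨k, rfl⟩ : ∃ k, m = k + 1 := ⟨m - 1, by omega⟩
      have hd : n = 2 * (k + 1) := by omega
      subst hd
      rw [pellP_double, padicValNat.mul (by have := pellP_pos (k+1) (by omega); omega)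
        (by have := pellQ_mod_four (k+1); omega), padicValNat_pellQ,
        padicValNat.mul (by norm_num) (by omega), padicValNat.self (by norm_num),
        ih (k+1) (by omega) (by omega)]
      omega
    · have h1 : padicValNat 2 (pellP n) = 0 := by
        apply padicValNat.eq_zero_of_not_dvd
        have := pellP_mod_two n
        obtain ⟨m, hm⟩ := ho
        omega
      have h2 : padicValNat 2 n = 0 := by
        apply padicValNat.eq_zero_of_not_dvd
        obtain ⟨m, hm⟩ := ho
        omega
      rw [h1, h2]
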